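/- arXiv:2506.02630 — 5 statements merged into one kernel-verified Lean document; each statement's English description precedes it below -/
import Mathlib

section
/- For every fixed x ∈ ℝ with x ≠ 0, the rescaled HAM Bregman potential (α/ln α)·R_α(x) converges to |x| as α → ∞, where R_α(x) = ((α|x|+1)·ln(α|x|+1) − α|x|)/α². -/
noncomputable def RHam (α x : ℝ) : ℝ :=
  ((α * |x| + 1) * Real.log (α * |x| + 1) - α * |x|) / α ^ 2

open Filter Topology Real

lemma tendsto_log_mul_add_one_div_log {t : ℝ} (ht : 0 < t) :
    Tendsto (fun α => log (α * t + 1) / log α) atTop (𝓝 1) := by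
  have hlog_shift : Tendsto (fun α : ℝ => log (t + α⁻¹)) atTop (𝓝 (log t)) := by
    have : Tendsto (fun α : ℝ => t + α⁻¹) atTop (𝓝 t) := by
      simpa using (tendsto_const_nhds (x := t)).add tendsto_inv_atTop_zero
    exact (continuousAt_log ht.ne').tendsto.comp this
  have hquot : Tendsto (fun α => 1 + log (t + α⁻¹) * (log α)⁻¹) atTop (𝓝 1) := by
    simpa using tendsto_const_nhds.add (hlog_shift.mul tendsto_log_atTop.inv_tendsto_atTop)
  refine hquot.congr' ?_
  filter_upwards [eventually_gt_atTop 1] with α hα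
  have hα₀ : 0 < α := one_pos.trans hα
  have hsplit : α * t + 1 = α * (t + α⁻¹) := by field_simp
  rw [hsplit, log_mul hα₀.ne' (by positivity), add_div, div_self (log_pos hα).ne', div_eq_mul_inv]

lemma rescaled_RHam_eq {α : ℝ} (hα : α ≠ 0) (x : ℝ) :
    α / log α * RHam α x = (|x| + α⁻¹) * (log (α * |x| + 1) / log α) - |x| / log α := by
  rcases eq_or_ne (log α) 0 with hlog | hlog
  · simp [hlog]
  · unfold RHam
    field_simp

theorem ham_bregman_limit_alpha_infty_general (x : ℝ) :
    Filter.Tendsto (fun α : ℝ => (α / Real.log α) * RHam α x) Filter.atTop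
      (nhds |x|) := by
  rcases eq_or_ne x 0 with rfl | hx
  · simp [RHam]
  have hx0 : 0 < |x| := abs_pos.mpr hx
  have hlim : Tendsto (fun α => (|x| + α⁻¹) * (log (α * |x| + 1) / log α) - |x| / log α)
      atTop (𝓝 |x|) := by
    simpa using ((tendsto_const_nhds.add tendsto_inv_atTop_zero).mul
      (tendsto_log_mul_add_one_div_log hx0)).sub
      (tendsto_const_nhds.div_atTop tendsto_log_atTop)
  refine hlim.congr' ?_
  filter_upwards [eventually_ne_atTop 0] with α hα
  exact (rescaled_RHam_eq hα x).symm

/-- For fixed `x ≠ 0`, the rescaled potential `(α/ln α)·R_α(x)` converges to `|x|`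
as `α → ∞`. -/
theorem ham_bregman_limit_alpha_infty (x : ℝ) (hx : x ≠ 0) :
    Filter.Tendsto (fun α : ℝ => (α / Real.log α) * RHam α x) Filter.atTop
      (nhds |x|) :=
  ham_bregman_limit_alpha_infty_general x
end

section
/- Let f: ℝⁿ → ℝ be continuously differentiable and satisfy the Polyak–Łojasiewicz inequality (1/2)‖∇f(x)‖² ≥ Λ·(f(x) − f*) with constant Λ > 0, where f* = inf f. Suppose x: [0,∞) → ℝⁿ solves the HAM gradient flow dx_i/dt = −(1 + α|x_i(t)|)·∂_i f(x(t)) with α ≥ 0. Then for all t ≥ 0, f(x(t)) − f* ≤ (f(x(0)) − f*)·exp(−2Λt). -/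
/-!
Along the HAM flow `f ∘ x` decreases at rate `⟪∇f, ẋ⟫ = -∑ (1 + α|x_i|) (∂_i f)² ≤ -‖∇f‖²`,
since every artificial learning rate is at least `1`. The PL inequality turns this into the
differential inequality `(f ∘ x - f*)' ≤ -2Λ (f ∘ x - f*)`, and Grönwall's argument (the product
with `exp (2Λt)` is antitone) gives the exponential decay.
-/

open Real
open scoped RealInnerProductSpace

theorem le_mul_exp_of_hasDerivAt_le_mul {g g' : ℝ → ℝ} {K : ℝ}
    (hg : ∀ t, HasDerivAt g (g' t) t) (hle : ∀ t, g' t ≤ K * g t) {t : ℝ} (ht : 0 ≤ t) :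
    g t ≤ g 0 * exp (K * t) := by
  have hexp : ∀ s, HasDerivAt (fun s => exp (-(K * s))) (-K * exp (-(K * s))) s := fun s => by
    simpa [mul_comm] using ((hasDerivAt_id s).const_mul K).neg.exp
  have hanti : Antitone fun s => g s * exp (-(K * s)) := by
    refine antitone_of_hasDerivAt_nonpos (fun s => (hg s).mul (hexp s)) fun s => ?_
    have := mul_le_mul_of_nonneg_right (hle s) (exp_pos (-(K * s))).le
    simp only [Pi.zero_apply]
    linarith
  have hdecay : g t * exp (-(K * t)) ≤ g 0 := by simpa using hanti ht
  calc g t = g t * exp (-(K * t)) * exp (K * t) := by rw [mul_assoc, ← exp_add]; simp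
    _ ≤ g 0 * exp (K * t) := by gcongr

theorem EuclideanSpace.hasDerivAt_of_forall_apply {ι : Type*} [Fintype ι]
    {x : ℝ → EuclideanSpace ℝ ι} {v : EuclideanSpace ℝ ι} {t : ℝ}
    (hx : ∀ i, HasDerivAt (fun s => x s i) (v i) t) : HasDerivAt x v t := by
  let φ := EuclideanSpace.equiv ι ℝ
  have hφ : HasDerivAt (fun s => φ (x s)) (φ v) t := hasDerivAt_pi.2 hx
  simpa [Function.comp_def] using φ.symm.hasFDerivAt.comp_hasDerivAt t hφ

theorem DifferentiableAt.hasDerivAt_comp_inner_gradient {E : Type*} [NormedAddCommGroup E]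
    [InnerProductSpace ℝ E] [CompleteSpace E] {f : E → ℝ} {x : ℝ → E} {v : E} {t : ℝ}
    (hf : DifferentiableAt ℝ f (x t)) (hx : HasDerivAt x v t) :
    HasDerivAt (fun s => f (x s)) ⟪gradient f (x t), v⟫ t := by
  have hchain := hf.hasGradientAt.hasFDerivAt.comp_hasDerivAt t hx
  rwa [InnerProductSpace.toDual_apply_apply] at hchain

section HAM

variable {ι : Type*} [Fintype ι]

noncomputable def hamField (α : ℝ) (f : EuclideanSpace ℝ ι → ℝ) (y : EuclideanSpace ℝ ι) :
    EuclideanSpace ℝ ι :=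
  WithLp.toLp 2 fun i => -(1 + α * |y i|) * gradient f y i

theorem inner_gradient_hamField_le {α : ℝ} (hα : 0 ≤ α) (f : EuclideanSpace ℝ ι → ℝ)
    (y : EuclideanSpace ℝ ι) :
    ⟪gradient f y, hamField α f y⟫ ≤ -‖gradient f y‖ ^ 2 := by
  rw [← real_inner_self_eq_norm_sq, PiLp.inner_apply, PiLp.inner_apply, ← Finset.sum_neg_distrib]
  refine Finset.sum_le_sum fun i _ => ?_
  have hrate : 0 ≤ α * |y i| := mul_nonneg hα (abs_nonneg _)
  simp only [hamField, PiLp.toLp_apply, RCLike.inner_apply, conj_trivial]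
  nlinarith [sq_nonneg (gradient f y i)]

end HAM

theorem ham_flow_pl_convergence_general (n : ℕ) (α Λ fstar : ℝ) (hα : 0 ≤ α)
    (f : EuclideanSpace ℝ (Fin n) → ℝ) (hf : ContDiff ℝ 1 f)
    (hPL : ∀ y : EuclideanSpace ℝ (Fin n),
      Λ * (f y - fstar) ≤ (1 / 2) * ‖gradient f y‖ ^ 2)
    (x : ℝ → EuclideanSpace ℝ (Fin n))
    (hx : ∀ t : ℝ, ∀ i : Fin n, HasDerivAt (fun s => x s i)
      (-(1 + α * |x t i|) * gradient f (x t) i) t) :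
    ∀ t : ℝ, 0 ≤ t →
      f (x t) - fstar ≤ (f (x 0) - fstar) * Real.exp (-2 * Λ * t) := by
  have hflow : ∀ s, HasDerivAt x (hamField α f (x s)) s := fun s =>
    EuclideanSpace.hasDerivAt_of_forall_apply (hx s)
  have hgap : ∀ s, HasDerivAt (fun s => f (x s) - fstar)
      ⟪gradient f (x s), hamField α f (x s)⟫ s := fun s =>
    ((hf.differentiable one_ne_zero _).hasDerivAt_comp_inner_gradient (hflow s)).sub_const fstar
  refine fun t ht => le_mul_exp_of_hasDerivAt_le_mul hgap (fun s => ?_) ht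
  calc ⟪gradient f (x s), hamField α f (x s)⟫ ≤ -‖gradient f (x s)‖ ^ 2 :=
        inner_gradient_hamField_le hα f (x s)
    _ ≤ -2 * Λ * (f (x s) - fstar) := by linarith [hPL (x s)]

/-- Under the PL inequality, the HAM gradient flow converges linearly:
`f(x(t)) − f* ≤ (f(x(0)) − f*)·exp(−2Λt)` for all `t ≥ 0`. -/
theorem ham_flow_pl_convergence (n : ℕ) (α Λ fstar : ℝ) (hα : 0 ≤ α) (hΛ : 0 < Λ)
    (f : EuclideanSpace ℝ (Fin n) → ℝ) (hf : ContDiff ℝ 1 f)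
    (hfstar : fstar = ⨅ y : EuclideanSpace ℝ (Fin n), f y)
    (hPL : ∀ y : EuclideanSpace ℝ (Fin n),
      Λ * (f y - fstar) ≤ (1 / 2) * ‖gradient f y‖ ^ 2)
    (x : ℝ → EuclideanSpace ℝ (Fin n))
    (hx : ∀ t : ℝ, ∀ i : Fin n, HasDerivAt (fun s => x s i)
      (-(1 + α * |x t i|) * gradient f (x t) i) t) :
    ∀ t : ℝ, 0 ≤ t →
      f (x t) - fstar ≤ (f (x 0) - fstar) * Real.exp (-2 * Λ * t) :=
  ham_flow_pl_convergence_general n α Λ fstar hα f hf hPL x hx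
end

section
/- Let f: ℝⁿ → ℝ be continuously differentiable and satisfy the PL inequality with constant Λ > 0. Suppose x: [0,∞) → ℝⁿ solves the overparameterized gradient flow dx_i/dt = −√(x_i(t)² + γ²)·∂_i f(x(t)) with γ > 0. If m(t) := min_i √(x_i(t)² + γ²) ≥ c > 0 on [0,T], then f(x(t)) − f* ≤ (f(x(0)) − f*)·exp(−2cΛt) for t ∈ [0,T]. -/
/-!
Along the flow, `d/dt (f(x) - f*) = -∑ᵢ √(xᵢ² + γ²) (∂ᵢf)² ≤ -c ‖∇f‖² ≤ -2cΛ (f(x) - f*)`,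
the last step being the PL inequality; Grönwall's inequality turns this differential
inequality into exponential decay.
-/

open Real Set InnerProductSpace
open scoped RealInnerProductSpace

theorem hasDerivAt_piLp_of_forall {ι : Type*} [Fintype ι] {p : ENNReal} [Fact (1 ≤ p)]
    {E : ι → Type*} [∀ i, NormedAddCommGroup (E i)] [∀ i, NormedSpace ℝ (E i)]
    {φ : ℝ → PiLp p E} {v : ∀ i, E i} {t : ℝ} (h : ∀ i, HasDerivAt (fun s => φ s i) (v i) t) :
    HasDerivAt φ (WithLp.toLp p v) t :=
  (PiLp.continuousLinearEquiv p ℝ E).symm.hasFDerivAt.comp_hasDerivAt t (hasDerivAt_pi.2 h)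

theorem HasGradientAt.comp_hasDerivAt_inner {E : Type*} [NormedAddCommGroup E]
    [InnerProductSpace ℝ E] [CompleteSpace E] {f : E → ℝ} {x : ℝ → E} {g v : E} {t : ℝ}
    (hf : HasGradientAt f g (x t)) (hx : HasDerivAt x v t) :
    HasDerivAt (f ∘ x) ⟪g, v⟫ t := by
  simpa only [toDual_apply_apply] using hf.hasFDerivAt.comp_hasDerivAt t hx

theorem inner_toLp_neg_mul_le {ι : Type*} [Fintype ι] {c : ℝ} {w : ι → ℝ} (hw : ∀ i, c ≤ w i)
    (g : EuclideanSpace ℝ ι) :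
    ⟪g, WithLp.toLp 2 (fun i => -w i * g i)⟫ ≤ -(c * ‖g‖ ^ 2) := by
  rw [EuclideanSpace.norm_sq_eq, PiLp.inner_apply, Finset.mul_sum, ← Finset.sum_neg_distrib]
  refine Finset.sum_le_sum fun i _ => ?_
  simp only [Real.norm_eq_abs, sq_abs, RCLike.inner_apply, conj_trivial]
  nlinarith [hw i, sq_nonneg (g i)]

theorem le_mul_exp_of_hasDerivAt_le_mul_s9 {g g' : ℝ → ℝ} {K a b : ℝ}
    (hg : ∀ t ∈ Icc a b, HasDerivAt g (g' t) t) (hbound : ∀ t ∈ Ico a b, g' t ≤ K * g t) :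
    ∀ t ∈ Icc a b, g t ≤ g a * exp (K * (t - a)) := by
  intro t ht
  rw [← gronwallBound_ε0]
  refine le_gronwallBound_of_liminf_deriv_right_le
    (fun s hs => (hg s hs).continuousAt.continuousWithinAt)
    (fun s hs _ hr => (hg s (Ico_subset_Icc_self hs)).hasDerivWithinAt.liminf_right_slope_le hr)
    le_rfl (fun s hs => by simpa using hbound s hs) t ht

theorem mw_flow_pl_convergence_general (n : ℕ) (γ Λ c T fstar : ℝ)
    (hc : 0 < c)
    (f : EuclideanSpace ℝ (Fin n) → ℝ) (hf : ContDiff ℝ 1 f)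
    (hPL : ∀ y : EuclideanSpace ℝ (Fin n),
      Λ * (f y - fstar) ≤ (1 / 2) * ‖gradient f y‖ ^ 2)
    (x : ℝ → EuclideanSpace ℝ (Fin n))
    (hx : ∀ t : ℝ, ∀ i : Fin n, HasDerivAt (fun s => x s i)
      (-Real.sqrt ((x t i) ^ 2 + γ ^ 2) * gradient f (x t) i) t)
    (hm : ∀ t ∈ Set.Icc (0 : ℝ) T, ∀ i : Fin n,
      c ≤ Real.sqrt ((x t i) ^ 2 + γ ^ 2)) :
    ∀ t ∈ Set.Icc (0 : ℝ) T,
      f (x t) - fstar ≤ (f (x 0) - fstar) * Real.exp (-2 * c * Λ * t) := by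
  set v : ℝ → EuclideanSpace ℝ (Fin n) := fun t =>
    WithLp.toLp 2 fun i => -√(x t i ^ 2 + γ ^ 2) * gradient f (x t) i
  have hgap : ∀ t, HasDerivAt (fun s => f (x s) - fstar) ⟪gradient f (x t), v t⟫ t := fun t =>
    ((hf.differentiable one_ne_zero (x t)).hasGradientAt.comp_hasDerivAt_inner
      (hasDerivAt_piLp_of_forall (hx t))).sub_const fstar
  have hdecay : ∀ t ∈ Ico 0 T,
      ⟪gradient f (x t), v t⟫ ≤ -2 * c * Λ * (f (x t) - fstar) := fun t ht =>
    calc ⟪gradient f (x t), v t⟫ ≤ -(c * ‖gradient f (x t)‖ ^ 2) :=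
          inner_toLp_neg_mul_le (hm t (Ico_subset_Icc_self ht)) _
      _ ≤ -2 * c * Λ * (f (x t) - fstar) := by nlinarith [hPL (x t)]
  intro t ht
  simpa only [sub_zero, mul_assoc] using
    le_mul_exp_of_hasDerivAt_le_mul_s9 (fun t _ => hgap t) hdecay t ht

/-- Under the PL inequality, the `m ⊙ w` overparameterized gradient flow with
artificial learning rate `√(x_i² + γ²)` bounded below by `c` on `[0,T]`
converges at rate `exp(−2cΛt)`. -/
theorem mw_flow_pl_convergence (n : ℕ) (γ Λ c T fstar : ℝ)
    (hγ : 0 < γ) (hΛ : 0 < Λ) (hc : 0 < c)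
    (f : EuclideanSpace ℝ (Fin n) → ℝ) (hf : ContDiff ℝ 1 f)
    (hfstar : fstar = ⨅ y : EuclideanSpace ℝ (Fin n), f y)
    (hPL : ∀ y : EuclideanSpace ℝ (Fin n),
      Λ * (f y - fstar) ≤ (1 / 2) * ‖gradient f y‖ ^ 2)
    (x : ℝ → EuclideanSpace ℝ (Fin n))
    (hx : ∀ t : ℝ, ∀ i : Fin n, HasDerivAt (fun s => x s i)
      (-Real.sqrt ((x t i) ^ 2 + γ ^ 2) * gradient f (x t) i) t)
    (hm : ∀ t ∈ Set.Icc (0 : ℝ) T, ∀ i : Fin n,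
      c ≤ Real.sqrt ((x t i) ^ 2 + γ ^ 2)) :
    ∀ t ∈ Set.Icc (0 : ℝ) T,
      f (x t) - fstar ≤ (f (x 0) - fstar) * Real.exp (-2 * c * Λ * t) :=
  mw_flow_pl_convergence_general n γ Λ c T fstar hc f hf hPL x hx hm
end

section
/- Let u_0, v_0 > 0 and define x(t) = u_0²·exp(−2G(t) − βt) − v_0²·exp(2G(t) − βt) where G(t) = ∫_0^t g(s) ds for a continuous function g, and β ≥ 0. Then x satisfies the ODE dx/dt = −2√(x(t)² + 4u_0²v_0²e^{−2βt}}·g(t)·θ(t) − βx(t) where θ(t) = 1, i.e., dx/dt = −2(u_0²e^{−2G−βt} + v_0²e^{2G−βt})·g(t) − βx(t), and u_0²e^{−2G−βt} + v_0²e^{2G−βt} = √(x(t)² + 4u_0²v_0²e^{−2βt}). -/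
/-!
Writing `a = u₀²e^{−2G−βt}` and `b = v₀²e^{2G−βt}`, we have `x = a − b`, and since `G' = g`
the chain rule gives `a' = (−2g − β)a`, `b' = (2g − β)b`, hence
`x' = −2(a + b)g − β(a − b)`. Moreover `ab = u₀²v₀²e^{−2βt}` no longer depends on `G`,
so `a + b = √((a − b)² + 4ab)` is a function of `x` and `t` alone.
-/

open Real

theorem Real.sqrt_sub_sq_add_four_mul {a b : ℝ} (h : 0 ≤ a + b) :
    √((a - b) ^ 2 + 4 * (a * b)) = a + b := by
  rw [show (a - b) ^ 2 + 4 * (a * b) = (a + b) ^ 2 by ring, sqrt_sq h]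

theorem hasDerivAt_const_mul_exp_mul_sub_mul {G : ℝ → ℝ} {γ t : ℝ} (c k β : ℝ)
    (hG : HasDerivAt G γ t) :
    HasDerivAt (fun s => c * exp (k * G s - β * s))
      (c * exp (k * G t - β * t) * (k * γ - β)) t := by
  have hexponent : HasDerivAt (fun s => k * G s - β * s) (k * γ - β) t :=
    ((hG.const_mul k).sub ((hasDerivAt_id t).const_mul β)).congr_deriv (by ring)
  simpa only [mul_assoc] using hexponent.exp.const_mul c

section HyperbolicFlow

variable (u0 v0 β : ℝ) (G : ℝ → ℝ) (t : ℝ) {γ : ℝ}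

theorem hasDerivAt_hyperbolicFlow (hG : HasDerivAt G γ t) :
    HasDerivAt (fun s => u0 ^ 2 * exp (-2 * G s - β * s) - v0 ^ 2 * exp (2 * G s - β * s))
      (-2 * (u0 ^ 2 * exp (-2 * G t - β * t) + v0 ^ 2 * exp (2 * G t - β * t)) * γ
        - β * (u0 ^ 2 * exp (-2 * G t - β * t) - v0 ^ 2 * exp (2 * G t - β * t))) t :=
  ((hasDerivAt_const_mul_exp_mul_sub_mul (u0 ^ 2) (-2) β hG).sub
    (hasDerivAt_const_mul_exp_mul_sub_mul (v0 ^ 2) 2 β hG)).congr_deriv (by ring)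

theorem hyperbolicFlow_mul_eq :
    u0 ^ 2 * exp (-2 * G t - β * t) * (v0 ^ 2 * exp (2 * G t - β * t))
      = u0 ^ 2 * v0 ^ 2 * exp (-2 * β * t) := by
  rw [mul_mul_mul_comm, ← exp_add]
  congr 2
  ring

theorem hyperbolicFlow_add_eq_sqrt :
    u0 ^ 2 * exp (-2 * G t - β * t) + v0 ^ 2 * exp (2 * G t - β * t)
      = √((u0 ^ 2 * exp (-2 * G t - β * t) - v0 ^ 2 * exp (2 * G t - β * t)) ^ 2
          + 4 * u0 ^ 2 * v0 ^ 2 * exp (-2 * β * t)) := by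
  rw [mul_assoc 4, mul_assoc 4, ← hyperbolicFlow_mul_eq,
    sqrt_sub_sq_add_four_mul (by positivity)]

end HyperbolicFlow

theorem mw_hyperbolic_flow_general (u0 v0 β : ℝ)
    (g : ℝ → ℝ) (hg : Continuous g)
    (G : ℝ → ℝ) (hG : ∀ t : ℝ, G t = ∫ s in (0:ℝ)..t, g s)
    (x : ℝ → ℝ)
    (hx : ∀ t : ℝ, x t = u0 ^ 2 * Real.exp (-2 * G t - β * t)
      - v0 ^ 2 * Real.exp (2 * G t - β * t)) :
    ∀ t : ℝ,
      HasDerivAt x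
        (-2 * (u0 ^ 2 * Real.exp (-2 * G t - β * t)
          + v0 ^ 2 * Real.exp (2 * G t - β * t)) * g t - β * x t) t ∧
      u0 ^ 2 * Real.exp (-2 * G t - β * t) + v0 ^ 2 * Real.exp (2 * G t - β * t)
        = Real.sqrt ((x t) ^ 2 + 4 * u0 ^ 2 * v0 ^ 2 * Real.exp (-2 * β * t)) := by
  intro t
  have hGt : HasDerivAt G (g t) t := by
    rw [funext hG]
    exact (hg.integral_hasStrictDerivAt 0 t).hasDerivAt
  obtain rfl := funext hx
  exact ⟨hasDerivAt_hyperbolicFlow u0 v0 β G t hGt,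
    hyperbolicFlow_add_eq_sqrt u0 v0 β G t⟩

/-- The hyperbolic gradient flow of the `m ⊙ w` overparameterization with weight
decay: `x(t) = u₀²e^{−2G−βt} − v₀²e^{2G−βt}` satisfies
`dx/dt = −2(u₀²e^{−2G−βt} + v₀²e^{2G−βt})·g(t) − βx(t)`, and the bracket equals
`√(x(t)² + 4u₀²v₀²e^{−2βt})`. -/
theorem mw_hyperbolic_flow (u0 v0 β : ℝ) (hu : 0 < u0) (hv : 0 < v0) (hβ : 0 ≤ β)
    (g : ℝ → ℝ) (hg : Continuous g)
    (G : ℝ → ℝ) (hG : ∀ t : ℝ, G t = ∫ s in (0:ℝ)..t, g s)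
    (x : ℝ → ℝ)
    (hx : ∀ t : ℝ, x t = u0 ^ 2 * Real.exp (-2 * G t - β * t)
      - v0 ^ 2 * Real.exp (2 * G t - β * t)) :
    ∀ t : ℝ,
      HasDerivAt x
        (-2 * (u0 ^ 2 * Real.exp (-2 * G t - β * t)
          + v0 ^ 2 * Real.exp (2 * G t - β * t)) * g t - β * x t) t ∧
      u0 ^ 2 * Real.exp (-2 * G t - β * t) + v0 ^ 2 * Real.exp (2 * G t - β * t)
        = Real.sqrt ((x t) ^ 2 + 4 * u0 ^ 2 * v0 ^ 2 * Real.exp (-2 * β * t)) :=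
  mw_hyperbolic_flow_general u0 v0 β g hg G hG x hx
end

section
/- Let f(x) = (1/2)(zᵀx − y)² on ℝⁿ with z ≠ 0, and suppose x: [0,∞) → ℝⁿ solves the HAM flow dx_i/dt = −(1+α|x_i|)·∂_i f(x) with α ≥ 0, and x(t) → x_∞ with zᵀx_∞ = y. Then for R_α(x) = Σ_i ((α|x_i|+1)ln(α|x_i|+1) − α|x_i|)/α², the quantity ∇R_α(x(t)) − ∇R_α(x(0)) lies in the span of z for all t (i.e., the flow is a mirror flow and the dual trajectory stays in span{z}). -/
open Real Set

noncomputable def RHamVec (n : ℕ) (α : ℝ) (v : EuclideanSpace ℝ (Fin n)) : ℝ :=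
  ∑ i : Fin n, ((α * |v i| + 1) * Real.log (α * |v i| + 1) - α * |v i|) / α ^ 2

/-!
Coordinatewise `R_α(x) = Σ G(|xᵢ|)` with `G'(s) = log(1 + α s)/α` and `G'(0) = 0`, so `∇R_α` is the
odd map `φ(u) = sign u · log(1 + α|u|)/α`, whose derivative is `1/(1 + α|u|)`. Along the HAM flow
the chain rule cancels the factor `1 + α|xᵢ|`, so `d/dt ∇R_α(x(t)) = -∇f(x(t)) = -(⟪z, x⟫ - y) z`.
A curve whose velocity stays in a complete subspace `K` has all its increments in `K`: for
`w ∈ Kᗮ`, `t ↦ ⟪w, u t⟫` has derivative zero.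
-/

section GluedDerivatives

variable {G G' : ℝ → ℝ}

theorem hasDerivAt_of_eqOn_Ici_of_eqOn_Iic {h A B : ℝ → ℝ} {d u : ℝ}
    (hA : 0 ≤ u → HasDerivAt A d u) (hB : u ≤ 0 → HasDerivAt B d u)
    (hhA : EqOn h A (Ici 0)) (hhB : EqOn h B (Iic 0)) : HasDerivAt h d u := by
  rcases lt_trichotomy u 0 with hu | rfl | hu
  · exact (hB hu.le).congr_of_eventuallyEq (hhB.eventuallyEq_of_mem (Iic_mem_nhds hu))
  · have hA0 := (hA le_rfl).hasDerivWithinAt.congr hhA (hhA self_mem_Ici)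
    have hB0 := (hB le_rfl).hasDerivWithinAt.congr hhB (hhB self_mem_Iic)
    simpa only [Ici_union_Iic, hasDerivWithinAt_univ] using hA0.union hB0
  · exact (hA hu.le).congr_of_eventuallyEq (hhA.eventuallyEq_of_mem (Ici_mem_nhds hu))

theorem hasDerivAt_comp_abs (hG : ∀ s, 0 ≤ s → HasDerivAt G (G' s) s) (hG'0 : G' 0 = 0)
    (u : ℝ) : HasDerivAt (fun v => G |v|) (sign u * G' |u|) u := by
  refine hasDerivAt_of_eqOn_Ici_of_eqOn_Iic (A := G) (B := fun v => G (-v))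
    (fun hu => ?_) (fun hu => ?_) (fun v hv => by simp [abs_of_nonneg (mem_Ici.1 hv)])
    (fun v hv => by simp [abs_of_nonpos (mem_Iic.1 hv)])
  · rcases hu.eq_or_lt with rfl | hu
    · simpa [hG'0] using hG 0 le_rfl
    · simpa [sign_of_pos hu, abs_of_pos hu] using hG u hu.le
  · have hcomp := (hG (-u) (neg_nonneg.2 hu)).comp u (hasDerivAt_neg u)
    rcases hu.lt_or_eq with hu | rfl
    · simpa [Function.comp_def, sign_of_neg hu, abs_of_neg hu] using hcomp
    · simpa [Function.comp_def, hG'0] using hcomp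

theorem hasDerivAt_sign_mul_comp_abs (hG : ∀ s, 0 ≤ s → HasDerivAt G (G' s) s) (hG0 : G 0 = 0)
    (u : ℝ) : HasDerivAt (fun v => sign v * G |v|) (G' |u|) u := by
  refine hasDerivAt_of_eqOn_Ici_of_eqOn_Iic (A := G) (B := fun v => -G (-v))
    (fun hu => by simpa [abs_of_nonneg hu] using hG u hu)
    (fun hu => by simpa [Function.comp_def, abs_of_nonpos hu] using
      ((hG (-u) (neg_nonneg.2 hu)).comp u (hasDerivAt_neg u)).fun_neg)
    (fun v hv => ?_) (fun v hv => ?_)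
  · rcases (mem_Ici.1 hv).eq_or_lt with rfl | hv
    · simp [hG0]
    · simp [sign_of_pos hv, abs_of_pos hv]
  · rcases (mem_Iic.1 hv).lt_or_eq with hv | rfl
    · simp [sign_of_neg hv, abs_of_neg hv]
    · simp [hG0]

end GluedDerivatives

section HamPotential

variable {α : ℝ}

noncomputable def hamPotential (α s : ℝ) : ℝ :=
  ((α * s + 1) * log (α * s + 1) - α * s) / α ^ 2

noncomputable def hamMirror (α u : ℝ) : ℝ :=
  sign u * (log (α * |u| + 1) / α)

theorem hasDerivAt_log_mul_add_one_div (hα : 0 < α) {s : ℝ} (hs : 0 ≤ s) :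
    HasDerivAt (fun s => log (α * s + 1) / α) (1 + α * s)⁻¹ s := by
  have hpos : 0 < α * s + 1 := by positivity
  have h := ((((hasDerivAt_id' s).const_mul α).add_const 1).log hpos.ne').div_const α
  refine h.congr_deriv ?_
  field_simp
  ring

theorem hasDerivAt_hamPotential (hα : 0 < α) {s : ℝ} (hs : 0 ≤ s) :
    HasDerivAt (hamPotential α) (log (α * s + 1) / α) s := by
  have hpos : 0 < α * s + 1 := by positivity
  have hlin : HasDerivAt (fun s => α * s + 1) α s := by
    simpa using ((hasDerivAt_id s).const_mul α).add_const 1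
  have h := ((hlin.mul (hlin.log hpos.ne')).sub ((hasDerivAt_id' s).const_mul α)).div_const (α ^ 2)
  refine h.congr_deriv ?_
  field_simp
  ring

theorem hasDerivAt_hamMirror (hα : 0 < α) (u : ℝ) :
    HasDerivAt (hamMirror α) (1 + α * |u|)⁻¹ u :=
  hasDerivAt_sign_mul_comp_abs (fun _ hs => hasDerivAt_log_mul_add_one_div hα hs) (by simp) u

theorem hasDerivAt_hamPotential_abs (hα : 0 < α) (u : ℝ) :
    HasDerivAt (fun v => hamPotential α |v|) (hamMirror α u) u :=
  hasDerivAt_comp_abs (fun _ hs => hasDerivAt_hamPotential hα hs) (by simp) u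

end HamPotential

theorem HasDerivAt.toLp {ι : Type*} [Fintype ι] (p : ENNReal) [Fact (1 ≤ p)] {f : ℝ → ι → ℝ}
    {f' : ι → ℝ} {t : ℝ} (hf : HasDerivAt f f' t) :
    HasDerivAt (fun τ => WithLp.toLp p (f τ)) (WithLp.toLp p f') t :=
  (PiLp.hasFDerivAt_toLp p (f t)).comp_hasDerivAt t hf

theorem hasGradientAt_sum_apply {ι : Type*} [Fintype ι] {g g' : ℝ → ℝ}
    (hg : ∀ u, HasDerivAt g (g' u) u) (v : EuclideanSpace ℝ ι) :
    HasGradientAt (fun w : EuclideanSpace ℝ ι => ∑ i, g (w i))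
      (WithLp.toLp 2 fun i => g' (v i)) v := by
  rw [hasGradientAt_iff_hasFDerivAt]
  have h := HasFDerivAt.fun_sum (u := Finset.univ)
    fun i _ => (hg (v i)).comp_hasFDerivAt v (PiLp.hasFDerivAt_apply (𝕜 := ℝ) 2 v i)
  refine h.congr_fderiv ?_
  ext w
  simp [PiLp.inner_apply, mul_comm]

theorem hasGradientAt_half_sq_inner_sub {E : Type*} [NormedAddCommGroup E]
    [InnerProductSpace ℝ E] [CompleteSpace E] (z : E) (y : ℝ) (v : E) :
    HasGradientAt (fun w => 1 / 2 * (inner ℝ z w - y) ^ 2) ((inner ℝ z v - y) • z) v := by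
  rw [hasGradientAt_iff_hasFDerivAt]
  have h := (((innerSL ℝ z).hasFDerivAt (x := v)).sub_const y).pow 2 |>.const_mul (1 / 2 : ℝ)
  refine h.congr_fderiv ?_
  ext w
  simp only [one_div, coe_innerSL_apply, Nat.add_one_sub_one, pow_one, nsmul_eq_mul,
    Nat.cast_ofNat, smul_apply, smul_eq_mul, map_smul,
    InnerProductSpace.toDual_apply_apply]
  ring

theorem sub_mem_of_forall_hasDerivAt_mem {E : Type*} [NormedAddCommGroup E]
    [InnerProductSpace ℝ E] {K : Submodule ℝ E} [K.HasOrthogonalProjection] {u u' : ℝ → E}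
    (hu : ∀ t, HasDerivAt u (u' t) t) (hu' : ∀ t, u' t ∈ K) (t s : ℝ) : u t - u s ∈ K := by
  rw [← K.orthogonal_orthogonal]
  intro w hw
  have hconst : ∀ τ, HasDerivAt (fun τ => inner ℝ w (u τ)) 0 τ := fun τ => by
    simpa [Submodule.inner_left_of_mem_orthogonal (hu' τ) hw] using
      (hasDerivAt_const τ w).inner ℝ (hu τ)
  rw [inner_sub_right, sub_eq_zero]
  exact is_const_of_deriv_eq_zero (fun τ => (hconst τ).differentiableAt)
    (fun τ => (hconst τ).deriv) t s

theorem gradient_RHamVec {n : ℕ} {α : ℝ} (hα : 0 < α) (v : EuclideanSpace ℝ (Fin n)) :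
    gradient (RHamVec n α) v = WithLp.toLp 2 fun i => hamMirror α (v i) :=
  (hasGradientAt_sum_apply (hasDerivAt_hamPotential_abs hα) v).gradient

theorem hasDerivAt_gradient_RHamVec_comp {n : ℕ} {α : ℝ} (hα : 0 < α)
    {f : EuclideanSpace ℝ (Fin n) → ℝ} {x : ℝ → EuclideanSpace ℝ (Fin n)}
    (hx : ∀ t : ℝ, ∀ i : Fin n, HasDerivAt (fun s => x s i)
      (-(1 + α * |x t i|) * gradient f (x t) i) t) (t : ℝ) :
    HasDerivAt (fun s => gradient (RHamVec n α) (x s)) (-gradient f (x t)) t := by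
  simp only [gradient_RHamVec hα]
  refine HasDerivAt.toLp 2 (hasDerivAt_pi.2 fun i => ?_)
  refine ((hasDerivAt_hamMirror hα (x t i)).comp t (hx t i)).congr_deriv ?_
  have : 1 + α * |x t i| ≠ 0 := by positivity
  rw [neg_mul, mul_neg, inv_mul_cancel_left₀ this]
  rfl

theorem ham_flow_mirror_span_general (n : ℕ) (α y : ℝ) (hα : 0 ≤ α)
    (z : EuclideanSpace ℝ (Fin n))
    (f : EuclideanSpace ℝ (Fin n) → ℝ)
    (hf : ∀ v, f v = (1 / 2) * (inner ℝ z v - y : ℝ) ^ 2)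
    (x : ℝ → EuclideanSpace ℝ (Fin n))
    (hx : ∀ t : ℝ, ∀ i : Fin n, HasDerivAt (fun s => x s i)
      (-(1 + α * |x t i|) * gradient f (x t) i) t) :
    ∀ t : ℝ,
      gradient (RHamVec n α) (x t) - gradient (RHamVec n α) (x 0)
        ∈ Submodule.span ℝ ({z} : Set (EuclideanSpace ℝ (Fin n))) := by
  rcases hα.eq_or_lt with rfl | hα
  · -- `RHamVec n 0` vanishes identically, since division by `α ^ 2 = 0` returns `0`.
    have hR : RHamVec n 0 = fun _ => 0 := by
      funext v
      simp [RHamVec]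
    simp [hR]
  have hgrad_mem (s : ℝ) : -gradient f (x s) ∈ ℝ ∙ z := by
    rw [show f = _ from funext hf, (hasGradientAt_half_sq_inner_sub z y (x s)).gradient]
    exact neg_mem (Submodule.smul_mem _ _ (Submodule.mem_span_singleton_self z))
  intro t
  exact sub_mem_of_forall_hasDerivAt_mem (hasDerivAt_gradient_RHamVec_comp hα hx) hgrad_mem t 0

/-- For underdetermined linear regression `f(x) = (1/2)(zᵀx − y)²`, along the HAM
flow the dual (mirror) trajectory `∇R_α(x(t)) − ∇R_α(x(0))` stays in `span{z}`. -/
theorem ham_flow_mirror_span (n : ℕ) (α y : ℝ) (hα : 0 ≤ α)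
    (z : EuclideanSpace ℝ (Fin n)) (hz : z ≠ 0)
    (f : EuclideanSpace ℝ (Fin n) → ℝ)
    (hf : ∀ v, f v = (1 / 2) * (inner ℝ z v - y : ℝ) ^ 2)
    (x : ℝ → EuclideanSpace ℝ (Fin n)) (xinf : EuclideanSpace ℝ (Fin n))
    (hx : ∀ t : ℝ, ∀ i : Fin n, HasDerivAt (fun s => x s i)
      (-(1 + α * |x t i|) * gradient f (x t) i) t)
    (hlim : Filter.Tendsto x Filter.atTop (nhds xinf))
    (hinterp : (inner ℝ z xinf : ℝ) = y) :
    ∀ t : ℝ,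
      gradient (RHamVec n α) (x t) - gradient (RHamVec n α) (x 0)
        ∈ Submodule.span ℝ ({z} : Set (EuclideanSpace ℝ (Fin n))) :=
  ham_flow_mirror_span_general n α y hα z f hf x hx
end
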